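/- For any finite set A with |A| ≥ 2, distinguished element a₀ ∈ A, and any d < |A| − 1: there is no function Ans : (queries : adaptive d-round strategy over A) with fewer than |A| − d − 1 total queried elements per run that determines f^{d+1}(a₀) for all total f : A → A. Concretely: for every adaptive d-round strategy that in each round queries a set of elements of A (asking for the full value f(x) at each queried x), with total queries over all rounds < |A| − d − 1, there exist total functions f, g : A → A giving identical answers to the strategy but with f^{d+1}(a₀) ≠ g^{d+1}(a₀). -/

import Mathlib

/-- Answers accumulated by an adaptive query strategy `Q` against a total function
`f : A → A` after `k` rounds, as a partial function `A ⇀ A`: `Q k a` is the finite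
set of elements queried in round `k` (which may depend on the answers `a` received
in earlier rounds), and a queried `x` is answered with the full value `f x`. -/
def accAnsA {A : Type} [DecidableEq A] (f : A → A)
    (Q : ℕ → (A → Option A) → Finset A) : ℕ → A → Option A
  | 0 => fun _ => none
  | k + 1 => fun x =>
      if x ∈ Q k (accAnsA f Q k) then some (f x) else accAnsA f Q k x

/-!
Play the adversary that answers every element queried for the first time in round `k` with one
common fresh element `z_k`, one not queried in this or any earlier round.
By induction on `k`, after `k` rounds the partial map of answers sends every point to an
unanswered one within `k` steps, since a new answer never points at a queried element.
Any total `f` extending the final answers produces exactly these answers against the strategy.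
Because fewer than `|A| - d - 1` points are answered, the orbit of `a₀` can then be completed
in two ways along fresh points whose `(d+1)`-st iterates differ.
-/

namespace QueryLowerBound

section PartialMaps

variable {A : Type*}

def Extends (p q : A → Option A) : Prop :=
  ∀ x v, p x = some v → q x = some v

theorem Extends.trans {p q r : A → Option A} (hpq : Extends p q) (hqr : Extends q r) :
    Extends p r :=
  fun x v h => hqr x v (hpq x v h)

theorem Extends.eq_none {p q : A → Option A} (h : Extends p q) {x : A} (hx : q x = none) :
    p x = none := by
  cases hp : p x with
  | none => rfl
  | some v => simp [h x v hp] at hx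

theorem Extends.apply_eq {p : A → Option A} {f : A → A} (h : Extends p (some ∘ f)) {x v : A}
    (hx : p x = some v) : f x = v :=
  Option.some_inj.mp (h x v hx)

theorem extends_getD (p : A → Option A) : Extends p (some ∘ fun x => (p x).getD x) := by
  intro x v h
  simp [h]

theorem extends_update_of_eq_none [DecidableEq A] {p : A → Option A} {a : A} (ha : p a = none)
    (w : Option A) : Extends p (Function.update p a w) := by
  intro x v h
  have hx : x ≠ a := by rintro rfl; simp [ha] at h
  rwa [Function.update_of_ne hx]

def ReachesUndefined (p : A → Option A) : ℕ → A → Prop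
  | 0, a => p a = none
  | n + 1, a => ∀ b, p a = some b → ReachesUndefined p n b

theorem ReachesUndefined.of_eq_none {p : A → Option A} {a : A} (h : p a = none) :
    ∀ n, ReachesUndefined p n a
  | 0 => h
  | _ + 1 => fun b hb => by simp [h] at hb

theorem ReachesUndefined.succ_of_extends {p q : A → Option A} (hpq : Extends p q)
    (hnew : ∀ x v, p x = none → q x = some v → q v = none) :
    ∀ {n a}, ReachesUndefined p n a → ReachesUndefined q (n + 1) a
  | 0, a, ha => fun b hb => hnew a b ha hb
  | n + 1, a, ha => by
    intro b hb
    cases hpa : p a with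
    | none => exact ReachesUndefined.of_eq_none (hnew a b hpa hb) _
    | some b' =>
      obtain rfl : b' = b := Option.some_inj.mp ((hpq a b' hpa).symm.trans hb)
      exact succ_of_extends hpq hnew (ha b' hpa)

end PartialMaps

section Extension

variable {A : Type*} [Fintype A]

theorem exists_notMem_of_ncard_lt {s : Set A} (h : s.ncard < Fintype.card A) : ∃ x, x ∉ s := by
  by_contra! hs
  rw [Set.eq_univ_of_forall hs, Set.ncard_univ, Nat.card_eq_fintype_card] at h
  exact lt_irrefl _ h

theorem exists_extends_iterate_ne [DecidableEq A] :
    ∀ {n : ℕ} {p : A → Option A} {a : A}, ReachesUndefined p n a →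
      {x | p x ≠ none}.ncard + n + 2 ≤ Fintype.card A →
      ∃ f g : A → A, Extends p (some ∘ f) ∧ Extends p (some ∘ g) ∧ f^[n + 1] a ≠ g^[n + 1] a
  | 0, p, a, ha, hcard => by
    obtain ⟨c, hc⟩ := Fintype.exists_ne_of_one_lt_card (by omega) a
    have completion_update (w : A) : Extends p (some ∘ fun x => (Function.update p a w x).getD x) :=
      (extends_update_of_eq_none ha _).trans (extends_getD _)
    exact ⟨_, _, completion_update a, completion_update c, by simpa using hc.symm⟩
  | n + 1, p, a, ha, hcard => by
    cases hpa : p a with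
    | some b =>
      obtain ⟨f, g, hf, hg, hne⟩ := exists_extends_iterate_ne (ha b hpa) (by omega)
      refine ⟨f, g, hf, hg, ?_⟩
      rwa [Function.iterate_succ_apply f, Function.iterate_succ_apply g, hf.apply_eq hpa,
        hg.apply_eq hpa]
    | none =>
      obtain ⟨c, hc⟩ := exists_notMem_of_ncard_lt (s := insert a {x | p x ≠ none})
        ((Set.ncard_insert_le _ _).trans_lt (by omega))
      simp only [Set.mem_insert_iff, Set.mem_ofPred_eq, not_or, not_not] at hc
      set p' := Function.update p a (some c)
      have hdom : {x | p' x ≠ none} ⊆ insert a {x | p x ≠ none} := by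
        intro x hx
        by_cases hxa : x = a
        · exact Or.inl hxa
        · exact Or.inr (by simpa [p', hxa] using hx)
      have hcard' : {x | p' x ≠ none}.ncard + n + 2 ≤ Fintype.card A := by
        have := (Set.ncard_le_ncard hdom).trans (Set.ncard_insert_le _ _)
        omega
      obtain ⟨f, g, hf, hg, hne⟩ := exists_extends_iterate_ne
        (ReachesUndefined.of_eq_none (p := p') (a := c) (by simp [p', hc.1, hc.2]) n) hcard'
      have hpp' : Extends p p' := extends_update_of_eq_none hpa _
      have hp'a : p' a = some c := by simp [p']
      refine ⟨f, g, hpp'.trans hf, hpp'.trans hg, ?_⟩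
      rwa [Function.iterate_succ_apply f, Function.iterate_succ_apply g, hf.apply_eq hp'a,
        hg.apply_eq hp'a]

end Extension

section Adversary

variable {A : Type} [DecidableEq A] [Nonempty A] (Q : ℕ → (A → Option A) → Finset A)

-- A junk choice when every point is answered or queried; `hfree` below excludes that case.
noncomputable def freshAnswer (k : ℕ) (p : A → Option A) : A :=
  Classical.epsilon fun z => p z = none ∧ z ∉ Q k p

noncomputable def adversary : ℕ → A → Option A
  | 0 => fun _ => none
  | k + 1 => fun x =>
      if x ∈ Q k (adversary k) then
        some ((adversary k x).getD (freshAnswer Q k (adversary k)))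
      else adversary k x

theorem adversary_succ_eq_none {k : ℕ} {x : A} :
    adversary Q (k + 1) x = none ↔ adversary Q k x = none ∧ x ∉ Q k (adversary Q k) := by
  simp only [adversary]
  split_ifs with hx <;> simp [hx]

theorem extends_adversary_succ (k : ℕ) : Extends (adversary Q k) (adversary Q (k + 1)) := by
  intro x v h
  simp only [adversary]
  split_ifs <;> simp [h]

theorem extends_adversary_of_le {k k' : ℕ} (hk : k ≤ k') :
    Extends (adversary Q k) (adversary Q k') := by
  induction k', hk using Nat.le_induction with
  | base => exact fun _ _ => id
  | succ k' _ ih => exact ih.trans (extends_adversary_succ Q k')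

theorem adversary_succ_of_eq_none {k : ℕ} {x v : A} (hx : adversary Q k x = none)
    (hxv : adversary Q (k + 1) x = some v) : v = freshAnswer Q k (adversary Q k) := by
  simp only [adversary, hx] at hxv
  split_ifs at hxv
  exact (Option.some_inj.mp hxv).symm

theorem adversary_freshAnswer {k : ℕ} (hfree : ∃ u, adversary Q (k + 1) u = none) :
    adversary Q (k + 1) (freshAnswer Q k (adversary Q k)) = none :=
  (adversary_succ_eq_none Q).mpr <| Classical.epsilon_spec <|
    hfree.imp fun _ => (adversary_succ_eq_none Q).mp

theorem reachesUndefined_adversary {d : ℕ} (hfree : ∃ u, adversary Q d u = none) :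
    ∀ k ≤ d, ∀ a, ReachesUndefined (adversary Q k) k a := by
  intro k
  induction k with
  | zero => exact fun _ a => rfl
  | succ k ih =>
    intro hk a
    have hfresh := adversary_freshAnswer Q <|
      hfree.imp fun _ => (extends_adversary_of_le Q hk).eq_none
    refine (ih (by omega) a).succ_of_extends (extends_adversary_succ Q k) fun x v hx hxv => ?_
    rwa [adversary_succ_of_eq_none Q hx hxv]

theorem accAnsA_eq_adversary {f : A → A} {d : ℕ} (hf : Extends (adversary Q d) (some ∘ f)) :
    ∀ k ≤ d, accAnsA f Q k = adversary Q k := by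
  intro k
  induction k with
  | zero => exact fun _ => rfl
  | succ k ih =>
    intro hk
    funext x
    simp only [accAnsA, ih (by omega)]
    split_ifs with hx
    · obtain ⟨w, hw⟩ := Option.ne_none_iff_exists'.mp
        (mt (adversary_succ_eq_none Q).mp (fun h => h.2 hx))
      rw [hw, ((extends_adversary_of_le Q hk).trans hf).apply_eq hw]
    · simp only [adversary, if_neg hx]

end Adversary

end QueryLowerBound

open QueryLowerBound in
theorem stmt19_general {A : Type} [Fintype A] [DecidableEq A] (a₀ : A) (d : ℕ)
    (Q : ℕ → (A → Option A) → Finset A)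
    (hsize : ∀ f : A → A, {x | accAnsA f Q d x ≠ none}.ncard < Fintype.card A - d - 1) :
    ∃ f g : A → A, accAnsA f Q d = accAnsA g Q d ∧ f^[d + 1] a₀ ≠ g^[d + 1] a₀ := by
  have : Nonempty A := ⟨a₀⟩
  have hcard : {x | adversary Q d x ≠ none}.ncard + d + 2 ≤ Fintype.card A := by
    have h := hsize fun x => (adversary Q d x).getD x
    rw [accAnsA_eq_adversary Q (extends_getD _) d le_rfl] at h
    omega
  obtain ⟨u, hu⟩ := exists_notMem_of_ncard_lt (s := {x | adversary Q d x ≠ none}) (by omega)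
  obtain ⟨f, g, hf, hg, hne⟩ := exists_extends_iterate_ne
    (reachesUndefined_adversary Q ⟨u, not_not.mp hu⟩ d le_rfl a₀) hcard
  exact ⟨f, g, by rw [accAnsA_eq_adversary Q hf d le_rfl, accAnsA_eq_adversary Q hg d le_rfl], hne⟩

/-- combinatorial core of Theorem 3: over a finite set `A` with
`|A| ≥ 2`, distinguished element `a₀`, and `d < |A| − 1`, no adaptive `d`-round
query strategy that queries fewer than `|A| − d − 1` elements in total on every run
determines `f^{d+1}(a₀)` for all total `f : A → A`: there exist `f, g : A → A`
giving identical answers to the strategy but with `f^{d+1}(a₀) ≠ g^{d+1}(a₀)`. -/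
theorem stmt19 {A : Type} [Fintype A] [DecidableEq A] (a₀ : A) (d : ℕ)
    (hA : 2 ≤ Fintype.card A) (hd : d < Fintype.card A - 1)
    (Q : ℕ → (A → Option A) → Finset A)
    (hsize : ∀ f : A → A, {x | accAnsA f Q d x ≠ none}.ncard < Fintype.card A - d - 1) :
    ∃ f g : A → A, accAnsA f Q d = accAnsA g Q d ∧ f^[d + 1] a₀ ≠ g^[d + 1] a₀ :=
  stmt19_general a₀ d Q hsize
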